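/- arXiv:2101.02059 — 2 statements merged into one kernel-verified Lean document; each statement's English description precedes it below -/
import Mathlib

section
/- Let p be a prime and α < β < γ positive integers, and let G = ℤ/p^αℤ × ℤ/p^βℤ × ℤ/p^γℤ viewed as a ℤ-module. Fix a ∈ O_{α,p^k} with 0 ≤ k ≤ α−1. Then [(a, 0, 0) : G] = p^γ ℤ; for c ∈ O_{γ,p^i} with 0 ≤ i ≤ β−α+k, [(a, 0, c) : G] = p^β ℤ; for c ∈ O_{γ,p^i} with β−α+k+1 ≤ i ≤ γ−α+k−1, [(a, 0, c) : G] = p^{i+α−k} ℤ; and for c ∈ O_{γ,p^i} with γ−α+k ≤ i ≤ γ−1, [(a, 0, c) : G] = p^γ ℤ. -/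
/-- The `a`-annihilator `[a : G] = {x ∈ ℤ : xg ∈ ℤa for all g ∈ G}` of a finite abelian
group `G` viewed as a `ℤ`-module. -/
def annSet {G : Type*} [AddCommGroup G] (a : G) : Set ℤ :=
  {x : ℤ | ∀ g : G, ∃ n : ℤ, x • g = n • a}

/-- The group-annihilator graph `Γ(G)`: two distinct vertices `a, b` are adjacent iff
`[a : G][b : G]G = {0}`. -/
def annGraph (G : Type*) [AddCommGroup G] : SimpleGraph G where
  Adj a b := a ≠ b ∧ ∀ x ∈ annSet a, ∀ y ∈ annSet b, ∀ g : G, (x * y) • g = 0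
  symm := by
    constructor
    rintro a b ⟨hne, h⟩
    refine ⟨hne.symm, fun y hy x hx g => ?_⟩
    rw [mul_comm]
    exact h x hx y hy g
  loopless := by constructor; rintro a ⟨h, -⟩; exact h rfl

/-- The `p^i`-th orbit `O_{α,p^i} = {p^i b mod p^α : b ∈ ℤ, gcd(b,p) = 1}` of `ℤ/p^αℤ`. -/
def porbit (p α i : ℕ) : Set (ZMod (p ^ α)) :=
  {x : ZMod (p ^ α) | ∃ b : ℤ, Int.gcd b p = 1 ∧ x = (((p : ℤ) ^ i * b : ℤ) : ZMod (p ^ α))}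

/-!
An integer `x` lies in `[g : G]` as soon as `x • e ∈ ℤ g` for each of the three standard
generators `e` of `G`. For `g = (p^k b, 0, p^i d)` with `b, d` prime to `p`, the condition at
`e₁` asks for `n` with `x ≡ n p^k b (mod p^α)` and `p^(γ-i) ∣ n`, i.e. `p^min(γ-i+k, α) ∣ x`;
symmetrically `e₃` gives `p^min(α-k+i, γ) ∣ x`, and `e₂` gives `p^β ∣ x`. Hence
`[g : G] = p^e ℤ` with `e` the largest of these three exponents, and the four cases of the
theorem are evaluations of this maximum (`c = 0` being the case `i = γ`).
-/

theorem pow_max_dvd_iff {R : Type*} [CommMonoid R] (q x : R) (m n : ℕ) :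
    q ^ max m n ∣ x ↔ q ^ m ∣ x ∧ q ^ n ∣ x := by
  refine ⟨fun h => ⟨(pow_dvd_pow q (le_max_left m n)).trans h,
    (pow_dvd_pow q (le_max_right m n)).trans h⟩, fun ⟨hm, hn⟩ => ?_⟩
  rcases max_choice m n with h | h <;> rwa [h]

section PowerDivisibility

variable {R : Type*} [CommRing R]

theorem pow_dvd_mul_pow_mul_iff [IsDomain R] {q d : R} (hq : q ≠ 0) (hd : IsCoprime d q)
    {s t : ℕ} (hts : t ≤ s) (n : R) :
    q ^ s ∣ n * (q ^ t * d) ↔ q ^ (s - t) ∣ n := by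
  rw [show q ^ s = q ^ (s - t) * q ^ t by rw [← pow_add, Nat.sub_add_cancel hts],
    show n * (q ^ t * d) = n * d * q ^ t by ring, mul_dvd_mul_iff_right (pow_ne_zero t hq)]
  exact ⟨hd.pow_right.symm.dvd_of_dvd_mul_right, fun h => h.mul_right d⟩

/-- The ideal `(q ^ e * b, q ^ s)` is `(q ^ min e s)` when `b` is coprime to `q`. -/
theorem exists_pow_dvd_sub_mul_pow_mul_iff {q b : R} (hb : IsCoprime b q) (e s : ℕ) (x : R) :
    (∃ m, q ^ s ∣ x - m * (q ^ e * b)) ↔ q ^ min e s ∣ x := by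
  constructor
  · rintro ⟨m, hm⟩
    have h₁ : q ^ min e s ∣ x - m * (q ^ e * b) := (pow_dvd_pow q (min_le_right e s)).trans hm
    have h₂ : q ^ min e s ∣ m * (q ^ e * b) :=
      ((pow_dvd_pow q (min_le_left e s)).trans (dvd_mul_right _ b)).mul_left m
    simpa using h₁.add h₂
  · rintro ⟨y, rfl⟩
    rcases le_total e s with h | h
    · obtain ⟨u, v, huv⟩ := hb.pow_right (n := s)
      rw [min_eq_left h]
      exact ⟨y * u, q ^ e * y * v, by linear_combination (-(q ^ e * y)) * huv⟩
    · rw [min_eq_right h]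
      exact ⟨0, y, by ring⟩

end PowerDivisibility

theorem exists_zsmul_eq_and_zsmul_eq_zero_iff {p : ℕ} (hp : p ≠ 0) {b d : ℤ}
    (hb : IsCoprime b p) (hd : IsCoprime d p) {s₁ t₁ s₂ t₂ : ℕ} (ht₂ : t₂ ≤ s₂) (x : ℤ) :
    (∃ n : ℤ, n • (((p : ℤ) ^ t₁ * b : ℤ) : ZMod (p ^ s₁)) = x ∧
        n • (((p : ℤ) ^ t₂ * d : ℤ) : ZMod (p ^ s₂)) = 0) ↔
      (p : ℤ) ^ min (s₂ - t₂ + t₁) s₁ ∣ x := by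
  simp only [zsmul_eq_mul, ← Int.cast_mul, ZMod.intCast_eq_intCast_iff_dvd_sub,
    ZMod.intCast_zmod_eq_zero_iff_dvd, Nat.cast_pow,
    pow_dvd_mul_pow_mul_iff (Int.natCast_ne_zero.2 hp) hd ht₂]
  rw [← exists_pow_dvd_sub_mul_pow_mul_iff hb]
  constructor
  · rintro ⟨_, h, m, rfl⟩
    exact ⟨m, by rwa [show m * ((p : ℤ) ^ (s₂ - t₂ + t₁) * b) =
      (p : ℤ) ^ (s₂ - t₂) * m * ((p : ℤ) ^ t₁ * b) by ring]⟩
  · rintro ⟨m, h⟩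
    refine ⟨(p : ℤ) ^ (s₂ - t₂) * m, ?_, dvd_mul_right _ _⟩
    rwa [show m * ((p : ℤ) ^ (s₂ - t₂ + t₁) * b) =
      (p : ℤ) ^ (s₂ - t₂) * m * ((p : ℤ) ^ t₁ * b) by ring] at h

theorem mem_annSet_iff_of_closure_eq_top {G : Type*} [AddCommGroup G] {S : Set G}
    (hS : AddSubgroup.closure S = ⊤) (a : G) (x : ℤ) :
    x ∈ annSet a ↔ ∀ g ∈ S, ∃ n : ℤ, n • a = x • g := by
  refine ⟨fun h g _ => (h g).imp fun _ => Eq.symm, fun h g => ?_⟩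
  have hle : AddSubgroup.closure S ≤ (AddSubgroup.zmultiples a).comap (zsmulAddGroupHom x) :=
    (AddSubgroup.closure_le _).2 fun g hg => AddSubgroup.mem_zmultiples_iff.2 (h g hg)
  obtain ⟨n, hn⟩ := AddSubgroup.mem_zmultiples_iff.1 (hle (hS ▸ AddSubgroup.mem_top g))
  exact ⟨n, hn.symm⟩

theorem ZMod.closure_unitVectors_eq_top (M₁ M₂ M₃ : ℕ) :
    AddSubgroup.closure
      {((1, 0, 0) : ZMod M₁ × ZMod M₂ × ZMod M₃), (0, 1, 0), (0, 0, 1)} = ⊤ := by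
  refine eq_top_iff.2 fun ⟨g₁, g₂, g₃⟩ _ => ?_
  have hg : ((g₁, g₂, g₃) : ZMod M₁ × ZMod M₂ × ZMod M₃) =
      (g₁.cast : ℤ) • (1, 0, 0) + (g₂.cast : ℤ) • (0, 1, 0) + (g₃.cast : ℤ) • (0, 0, 1) := by
    simp
  rw [hg]
  refine add_mem (add_mem ?_ ?_) ?_ <;> exact zsmul_mem (AddSubgroup.subset_closure (by simp)) _

theorem annSet_pow_mul_zero_pow_mul {p : ℕ} (hp : p ≠ 0) {α β γ k i : ℕ} (hk : k ≤ α)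
    (hi : i ≤ γ) {b d : ℤ} (hb : IsCoprime b p) (hd : IsCoprime d p) :
    annSet (((((p : ℤ) ^ k * b : ℤ) : ZMod (p ^ α)), 0,
      (((p : ℤ) ^ i * d : ℤ) : ZMod (p ^ γ))) : ZMod (p ^ α) × ZMod (p ^ β) × ZMod (p ^ γ)) =
      {x : ℤ | (p : ℤ) ^ max (max (min (γ - i + k) α) β) (min (α - k + i) γ) ∣ x} := by
  ext x
  have hβ : (p : ℤ) ^ β ∣ x ↔ ((x : ZMod (p ^ β)) = 0) := by
    rw [ZMod.intCast_zmod_eq_zero_iff_dvd, Nat.cast_pow]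
  simp only [mem_annSet_iff_of_closure_eq_top
      (ZMod.closure_unitVectors_eq_top (p ^ α) (p ^ β) (p ^ γ)), Set.mem_insert_iff,
    Set.mem_singleton_iff, forall_eq_or_imp, forall_eq, Prod.smul_mk, smul_zero, zsmul_one, Prod.mk.injEq, true_and, Set.mem_ofPred_eq, pow_max_dvd_iff, hβ,
    exists_zsmul_eq_and_zsmul_eq_zero_iff hp hb hd hi]
  rw [← exists_zsmul_eq_and_zsmul_eq_zero_iff hp hd hb hk]
  exact ⟨fun ⟨h₁, ⟨_, _, h₂, _⟩, n, h₃, h₄⟩ => ⟨⟨h₁, h₂.symm⟩, n, h₄, h₃⟩,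
    fun ⟨⟨h₁, h₂⟩, n, h₃, h₄⟩ => ⟨h₁, ⟨0, zero_smul _ _, h₂.symm, zero_smul _ _⟩, n, h₄, h₃⟩⟩

theorem annSet_triple_a_zero_general (p α β γ : ℕ) (hp : p.Prime)
    (hαβ : α < β) (hβγ : β < γ) (k : ℕ) (hk : k ≤ α - 1)
    (a : ZMod (p ^ α)) (ha : a ∈ porbit p α k) :
    annSet ((a, 0, 0) : ZMod (p ^ α) × ZMod (p ^ β) × ZMod (p ^ γ)) =
      {x : ℤ | (p : ℤ) ^ γ ∣ x} ∧
    (∀ i, i ≤ β - α + k → ∀ c ∈ porbit p γ i,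
      annSet ((a, 0, c) : ZMod (p ^ α) × ZMod (p ^ β) × ZMod (p ^ γ)) =
        {x : ℤ | (p : ℤ) ^ β ∣ x}) ∧
    (∀ i, β - α + k + 1 ≤ i → i ≤ γ - α + k - 1 → ∀ c ∈ porbit p γ i,
      annSet ((a, 0, c) : ZMod (p ^ α) × ZMod (p ^ β) × ZMod (p ^ γ)) =
        {x : ℤ | (p : ℤ) ^ (i + α - k) ∣ x}) ∧
    (∀ i, γ - α + k ≤ i → i ≤ γ - 1 → ∀ c ∈ porbit p γ i,
      annSet ((a, 0, c) : ZMod (p ^ α) × ZMod (p ^ β) × ZMod (p ^ γ)) =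
        {x : ℤ | (p : ℤ) ^ γ ∣ x}) := by
  obtain ⟨b, hb, rfl⟩ := ha
  have hannSet : ∀ i ≤ γ, ∀ c ∈ porbit p γ i,
      annSet (((((p : ℤ) ^ k * b : ℤ) : ZMod (p ^ α)), 0, c) :
        ZMod (p ^ α) × ZMod (p ^ β) × ZMod (p ^ γ)) =
      {x : ℤ | (p : ℤ) ^ max (max (min (γ - i + k) α) β) (min (α - k + i) γ) ∣ x} := by
    rintro i hi c ⟨d, hd, rfl⟩
    exact annSet_pow_mul_zero_pow_mul hp.ne_zero (by omega) hi
      (Int.isCoprime_iff_gcd_eq_one.2 hb) (Int.isCoprime_iff_gcd_eq_one.2 hd)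
  have hzero : (0 : ZMod (p ^ γ)) ∈ porbit p γ γ :=
    ⟨1, by simp, by rw [mul_one]; exact_mod_cast (ZMod.natCast_self (p ^ γ)).symm⟩
  refine ⟨?_, fun i hi c hc => ?_, fun i hi₁ hi₂ c hc => ?_, fun i hi₁ hi₂ c hc => ?_⟩
  · convert hannSet γ le_rfl 0 hzero using 6
    omega
  · convert hannSet i (by omega) c hc using 6
    omega
  · convert hannSet i (by omega) c hc using 6
    omega
  · convert hannSet i (by omega) c hc using 6
    omega

/-- for a prime `p`, positive integers `α < β < γ`,
`G = ℤ/p^αℤ × ℤ/p^βℤ × ℤ/p^γℤ` and `a ∈ O_{α,p^k}` with `0 ≤ k ≤ α-1`: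
`[(a,0,0) : G] = p^γℤ`; `[(a,0,c) : G] = p^βℤ` for `c ∈ O_{γ,p^i}` with `0 ≤ i ≤ β-α+k`;
`[(a,0,c) : G] = p^(i+α-k)ℤ` for `c ∈ O_{γ,p^i}` with `β-α+k+1 ≤ i ≤ γ-α+k-1`; and
`[(a,0,c) : G] = p^γℤ` for `c ∈ O_{γ,p^i}` with `γ-α+k ≤ i ≤ γ-1`. -/
theorem annSet_triple_a_zero (p α β γ : ℕ) (hp : p.Prime) (hα : 0 < α)
    (hαβ : α < β) (hβγ : β < γ) (k : ℕ) (hk : k ≤ α - 1)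
    (a : ZMod (p ^ α)) (ha : a ∈ porbit p α k) :
    annSet ((a, 0, 0) : ZMod (p ^ α) × ZMod (p ^ β) × ZMod (p ^ γ)) =
      {x : ℤ | (p : ℤ) ^ γ ∣ x} ∧
    (∀ i, i ≤ β - α + k → ∀ c ∈ porbit p γ i,
      annSet ((a, 0, c) : ZMod (p ^ α) × ZMod (p ^ β) × ZMod (p ^ γ)) =
        {x : ℤ | (p : ℤ) ^ β ∣ x}) ∧
    (∀ i, β - α + k + 1 ≤ i → i ≤ γ - α + k - 1 → ∀ c ∈ porbit p γ i,
      annSet ((a, 0, c) : ZMod (p ^ α) × ZMod (p ^ β) × ZMod (p ^ γ)) =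
        {x : ℤ | (p : ℤ) ^ (i + α - k) ∣ x}) ∧
    (∀ i, γ - α + k ≤ i → i ≤ γ - 1 → ∀ c ∈ porbit p γ i,
      annSet ((a, 0, c) : ZMod (p ^ α) × ZMod (p ^ β) × ZMod (p ^ γ)) =
        {x : ℤ | (p : ℤ) ^ γ ∣ x}) :=
  annSet_triple_a_zero_general p α β γ hp hαβ hβγ k hk a ha
end

section
/- Let p be a prime and α = 2k − 1 with k ≥ 1 an integer, with (p, k) ≠ (2, 1), and let A be the adjacency matrix of the group-annihilator graph Γ(ℤ/p^αℤ). Then the eigenvalue 0 of A has multiplicity p^α − p^{k−1} − k, and the eigenvalue −1 of A has multiplicity p^{k−1} − k. -/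
/-- The adjacency matrix (over `ℝ`) of the group-annihilator graph `Γ(G)`. -/
noncomputable def annAdjMatrix (G : Type*) [AddCommGroup G] [Fintype G] [DecidableEq G] :
    Matrix G G ℝ :=
  letI := Classical.decRel (annGraph G).Adj
  (annGraph G).adjMatrix ℝ

/-!
In `ℤ/p^αℤ` we have `ab = 0` iff `v a + v b ≥ α`, where `v` is the `p`-adic valuation with
`v 0 = α`; so `Γ` is a threshold graph on the valuation levels `0, …, α`, and writing `T_m f` for
the sum of `f` over the levels `≥ m`, the adjacency matrix acts by
`(A f) a = T_{α - v a} f - [2 v a ≥ α] f a`.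
For `α = 2k - 1`, solving `A f = 0` resp. `A f = -f` level by level shows that every `T_m f`
vanishes, i.e. all level sums of `f` are zero, and that `f` vanishes on the levels `≥ k` resp.
`< k`; for `-1` this uses that level `k - 1` has `p^k - p^(k-1) ≥ 2` points, which fails only for
`p = 2, k = 1`. Conversely such `f` are eigenvectors, and they form a space of dimension
(number of points on the allowed levels) − (number of allowed levels); level `≥ m` has
`p^(α-m)` points.
-/

open Finset Matrix

section LevelSums
variable {V : Type*} [Fintype V] (v : V → ℕ)

noncomputable def levelSum (i : ℕ) (f : V → ℝ) : ℝ := ∑ b with v b = i, f b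

noncomputable def tailSum (m : ℕ) (f : V → ℝ) : ℝ := ∑ b with m ≤ v b, f b

noncomputable def levelSumConstraints (I : Finset ℕ) :
    (V → ℝ) →ₗ[ℝ] ({a // v a ∉ I} → ℝ) × (I → ℝ) :=
  (LinearMap.funLeft ℝ ℝ Subtype.val).prod
    (LinearMap.pi fun i => ∑ b with v b = i, LinearMap.proj b)

variable {v}

theorem levelSum_add_tailSum_succ (i : ℕ) (f : V → ℝ) :
    levelSum v i f + tailSum v (i + 1) f = tailSum v i f := by
  simp only [levelSum, tailSum, sum_filter, ← sum_add_distrib]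
  refine sum_congr rfl fun b _ => ?_
  split_ifs <;> first | omega | simp

theorem levelSum_eq_card_mul {i : ℕ} {f : V → ℝ} {t : ℝ} (h : ∀ b, v b = i → f b = t) :
    levelSum v i f = #{b | v b = i} * t := by
  rw [levelSum, sum_congr rfl fun b hb => h b (mem_filter.1 hb).2, sum_const, nsmul_eq_mul]

theorem eq_zero_of_levelSum_eq_zero {f : V → ℝ} {a : V} (hf : ∀ b, v b = v a → f b = f a)
    (hsum : levelSum v (v a) f = 0) : f a = 0 := by
  rw [levelSum_eq_card_mul hf] at hsum
  have : (#{b | v b = v a} : ℝ) ≠ 0 := by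
    exact_mod_cast (card_pos.2 ⟨a, by simp⟩).ne'
  exact (mul_eq_zero.1 hsum).resolve_left this

theorem forall_levelSum_eq_zero_iff {f : V → ℝ} :
    (∀ i, levelSum v i f = 0) ↔ ∀ m, tailSum v m f = 0 := by
  refine ⟨fun h m => ?_, fun h i => ?_⟩
  swap
  · linarith [levelSum_add_tailSum_succ (v := v) i f, h i, h (i + 1)]
  have hfib : ({b | m ≤ v b} : Finset V) = ({b | v b ∈ {i ∈ univ.image v | m ≤ i}} : Finset V) :=
    filter_congr fun b _ => by simp
  rw [tailSum, hfib, ← sum_fiberwise_eq_sum_filter]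
  exact sum_eq_zero fun i _ => h i

theorem mem_ker_levelSumConstraints {I : Finset ℕ} {f : V → ℝ} :
    f ∈ LinearMap.ker (levelSumConstraints v I) ↔
      (∀ i, levelSum v i f = 0) ∧ ∀ a, v a ∉ I → f a = 0 := by
  simp only [levelSumConstraints, LinearMap.ker_prod, Submodule.mem_inf, LinearMap.mem_ker,
    funext_iff, LinearMap.funLeft_apply, Pi.zero_apply, Subtype.forall, LinearMap.pi_apply,
    LinearMap.coe_sum, LinearMap.coe_proj, Finset.sum_apply, Function.eval, levelSum]
  refine ⟨fun ⟨hsupp, hsum⟩ => ⟨fun i => ?_, hsupp⟩,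
    fun ⟨hsum, hsupp⟩ => ⟨hsupp, fun i _ => hsum i⟩⟩
  by_cases hi : i ∈ I
  · exact hsum i hi
  · exact sum_eq_zero fun b hb => hsupp b ((mem_filter.1 hb).2 ▸ hi)

theorem finrank_ker_levelSumConstraints {I : Finset ℕ} (hI : ∀ i ∈ I, ∃ a, v a = i) :
    Module.finrank ℝ (LinearMap.ker (levelSumConstraints v I)) = #{a | v a ∈ I} - #I := by
  have hsurj : Function.Surjective (levelSumConstraints v I) := by
    rintro ⟨g, y⟩
    choose r hr using fun i : I => hI i i.2
    classical
    let f : V → ℝ := fun a =>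
      if h : v a ∈ I then (if a = r ⟨v a, h⟩ then y ⟨v a, h⟩ else 0) else g ⟨a, h⟩
    refine ⟨f, Prod.ext (funext fun a => dif_neg a.2) (funext fun ⟨i, hi⟩ => ?_)⟩
    simp only [levelSumConstraints, LinearMap.prod_apply, Function.prod_apply, LinearMap.pi_apply,
      LinearMap.coe_sum, LinearMap.coe_proj, Finset.sum_apply, Function.eval]
    calc ∑ b with v b = i, f b = ∑ b with v b = i, if b = r ⟨i, hi⟩ then y ⟨i, hi⟩ else 0 :=
          sum_congr rfl fun b hb => by
            obtain rfl := (mem_filter.1 hb).2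
            exact dif_pos hi
      _ = y ⟨i, hi⟩ := by simp [hr]
  have hrank := LinearMap.finrank_range_add_finrank_ker (levelSumConstraints v I)
  rw [LinearMap.range_eq_top.2 hsurj, finrank_top, Module.finrank_prod,
    Module.finrank_fintype_fun_eq_card, Module.finrank_fintype_fun_eq_card,
    Module.finrank_fintype_fun_eq_card, Fintype.card_coe, Fintype.card_subtype] at hrank
  have hsplit := card_filter_add_card_filter_not (s := univ) (fun a => v a ∈ I)
  rw [card_univ] at hsplit
  omega

end LevelSums

structure SimpleGraph.IsThresholdGraph {V : Type*} (Γ : SimpleGraph V) (v : V → ℕ) (α : ℕ) :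
    Prop where
  adj_iff : ∀ a b, Γ.Adj a b ↔ a ≠ b ∧ α ≤ v a + v b
  le_threshold : ∀ a, v a ≤ α
  exists_level : ∀ i ≤ α, ∃ a, v a = i

namespace SimpleGraph.IsThresholdGraph

variable {V : Type*} {Γ : SimpleGraph V} {v : V → ℕ} {α : ℕ}

theorem exists_level_sub (hΓ : Γ.IsThresholdGraph v α) {m : ℕ} (hm : m ≤ α) :
    ∃ a, v a = α - m ∧ α - v a = m := by
  obtain ⟨a, ha⟩ := hΓ.exists_level (α - m) (Nat.sub_le α m)
  exact ⟨a, ha, by omega⟩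

variable [Fintype V]

theorem tailSum_eq_zero (hΓ : Γ.IsThresholdGraph v α) {m : ℕ} (hm : α < m) (f : V → ℝ) :
    tailSum v m f = 0 :=
  sum_eq_zero fun b hb => absurd (hΓ.le_threshold b) (by simp at hb; omega)

variable [DecidableEq V] [DecidableRel Γ.Adj]

theorem adjMatrix_mulVec_apply (hΓ : Γ.IsThresholdGraph v α) (f : V → ℝ) (a : V) :
    (Γ.adjMatrix ℝ *ᵥ f) a = tailSum v (α - v a) f - if α ≤ 2 * v a then f a else 0 := by
  have hN : Γ.neighborFinset a = ({b | α - v a ≤ v b} : Finset V).erase a := by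
    ext b
    simp only [mem_neighborFinset, hΓ.adj_iff, mem_erase, mem_filter, mem_univ, true_and]
    exact and_congr ne_comm (by omega)
  rw [SimpleGraph.adjMatrix_mulVec_apply, hN, tailSum]
  split_ifs with h
  · rw [sum_erase_eq_sub (by simp; omega)]
  · rw [erase_eq_of_notMem (by simp; omega), sub_zero]

theorem adjMatrix_mulVec_eq_zero_iff_tailSum (hΓ : Γ.IsThresholdGraph v α) {k : ℕ}
    (hα : α + 1 = 2 * k) {f : V → ℝ} :
    Γ.adjMatrix ℝ *ᵥ f = 0 ↔ ∀ a, tailSum v (α - v a) f = if k ≤ v a then f a else 0 := by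
  simp only [funext_iff, hΓ.adjMatrix_mulVec_apply, Pi.zero_apply, sub_eq_zero,
    show ∀ a, α ≤ 2 * v a ↔ k ≤ v a from fun a => by omega]

theorem adjMatrix_mulVec_eq_neg_iff_tailSum (hΓ : Γ.IsThresholdGraph v α) {k : ℕ}
    (hα : α + 1 = 2 * k) {f : V → ℝ} :
    Γ.adjMatrix ℝ *ᵥ f = -f ↔ ∀ a, tailSum v (α - v a) f = if k ≤ v a then 0 else -f a := by
  simp only [funext_iff, hΓ.adjMatrix_mulVec_apply, Pi.neg_apply, sub_eq_iff_eq_add,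
    show ∀ a, α ≤ 2 * v a ↔ k ≤ v a from fun a => by omega]
  refine forall_congr' fun a => ?_
  split_ifs <;> ring_nf

theorem tailSum_eq_zero_of_adjMatrix_mulVec_eq_zero (hΓ : Γ.IsThresholdGraph v α) {k : ℕ}
    (hα : α + 1 = 2 * k) {f : V → ℝ} (hf : Γ.adjMatrix ℝ *ᵥ f = 0) (m : ℕ) :
    tailSum v m f = 0 := by
  have h := (hΓ.adjMatrix_mulVec_eq_zero_iff_tailSum hα).1 hf
  have high : ∀ m, k ≤ m → tailSum v m f = 0 := by
    intro m hm
    rcases le_or_gt m α with hmα | hmα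
    · obtain ⟨a, ha, ham⟩ := hΓ.exists_level_sub hmα
      rw [← ham, h a, if_neg (by omega)]
    · exact hΓ.tailSum_eq_zero hmα f
  have upper : ∀ a, k ≤ v a → f a = 0 := by
    intro a ha
    refine eq_zero_of_levelSum_eq_zero (v := v) (fun b hb => ?_) ?_
    · have hb' := h b
      rw [hb, if_pos ha, h a, if_pos ha] at hb'
      exact hb'.symm
    · linarith [levelSum_add_tailSum_succ (v := v) (v a) f, high (v a) ha,
        high (v a + 1) (by omega)]
  rcases le_or_gt k m with hm | hm
  · exact high m hm
  · obtain ⟨a, ha, ham⟩ := hΓ.exists_level_sub (show m ≤ α by omega)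
    rw [← ham, h a, if_pos (by omega), upper a (by omega)]

theorem tailSum_eq_zero_of_adjMatrix_mulVec_eq_neg (hΓ : Γ.IsThresholdGraph v α) {k : ℕ}
    (hα : α + 1 = 2 * k) (hcard : 2 ≤ #{a | v a = k - 1}) {f : V → ℝ}
    (hf : Γ.adjMatrix ℝ *ᵥ f = -f) (m : ℕ) : tailSum v m f = 0 := by
  have h := (hΓ.adjMatrix_mulVec_eq_neg_iff_tailSum hα).1 hf
  have low : ∀ m, m < k → tailSum v m f = 0 := by
    intro m hm
    obtain ⟨a, ha, ham⟩ := hΓ.exists_level_sub (show m ≤ α by omega)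
    rw [← ham, h a, if_pos (by omega)]
  have hconst : ∀ a, v a < k → ∀ b, v b = v a → f b = f a := by
    intro a ha b hb
    have hb' := h b
    rw [hb, if_neg (by omega), h a, if_neg (by omega)] at hb'
    linarith
  have lower : ∀ a, v a + 2 ≤ k → f a = 0 := by
    intro a ha
    refine eq_zero_of_levelSum_eq_zero (hconst a (by omega)) ?_
    linarith [levelSum_add_tailSum_succ (v := v) (v a) f, low (v a) (by omega),
      low (v a + 1) (by omega)]
  have high : ∀ m, k < m → tailSum v m f = 0 := by
    intro m hm
    rcases le_or_gt m α with hmα | hmα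
    · obtain ⟨a, ha, ham⟩ := hΓ.exists_level_sub hmα
      rw [← ham, h a, if_neg (by omega), lower a (by omega), neg_zero]
    · exact hΓ.tailSum_eq_zero hmα f
  -- On level `k - 1` the function is constant `-t` with `t = tailSum v k f`, so its level sum is
  -- both `-N t` and `tailSum v (k - 1) f - t = -t`; `N ≥ 2` forces `t = 0`.
  have middle : tailSum v k f = 0 := by
    obtain ⟨a, ha⟩ := hΓ.exists_level (k - 1) (by omega)
    have hfa : f a = -tailSum v k f := by
      have := h a
      rw [if_neg (by omega), show α - v a = k by omega] at this
      linarith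
    have hsum := levelSum_eq_card_mul fun b hb =>
      (hconst a (by omega) b (hb.trans ha.symm)).trans hfa
    have hsucc := levelSum_add_tailSum_succ (v := v) (k - 1) f
    rw [Nat.sub_add_cancel (by omega), low (k - 1) (by omega)] at hsucc
    have hN : (2 : ℝ) ≤ #{b | v b = k - 1} := by exact_mod_cast hcard
    have : ((#{b | v b = k - 1} : ℝ) - 1) * tailSum v k f = 0 := by linarith
    exact (mul_eq_zero.1 this).resolve_left (by linarith)
  exact (lt_trichotomy m k).elim (low m) fun hm => hm.elim (· ▸ middle) (high m)

theorem adjMatrix_mulVec_eq_zero_iff (hΓ : Γ.IsThresholdGraph v α) {k : ℕ} (hα : α + 1 = 2 * k)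
    {f : V → ℝ} :
    Γ.adjMatrix ℝ *ᵥ f = 0 ↔ (∀ i, levelSum v i f = 0) ∧ ∀ a, k ≤ v a → f a = 0 := by
  rw [forall_levelSum_eq_zero_iff]
  constructor
  · intro hf
    have htails := hΓ.tailSum_eq_zero_of_adjMatrix_mulVec_eq_zero hα hf
    refine ⟨htails, fun a ha => ?_⟩
    have := (hΓ.adjMatrix_mulVec_eq_zero_iff_tailSum hα).1 hf a
    rw [if_pos ha, htails] at this
    exact this.symm
  · rintro ⟨htails, hsupp⟩
    rw [hΓ.adjMatrix_mulVec_eq_zero_iff_tailSum hα]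
    intro a
    rw [htails]
    split_ifs with ha
    · exact (hsupp a ha).symm
    · rfl

theorem adjMatrix_mulVec_eq_neg_iff (hΓ : Γ.IsThresholdGraph v α) {k : ℕ} (hα : α + 1 = 2 * k)
    (hcard : 2 ≤ #{a | v a = k - 1}) {f : V → ℝ} :
    Γ.adjMatrix ℝ *ᵥ f = -f ↔ (∀ i, levelSum v i f = 0) ∧ ∀ a, v a < k → f a = 0 := by
  rw [forall_levelSum_eq_zero_iff]
  constructor
  · intro hf
    have htails := hΓ.tailSum_eq_zero_of_adjMatrix_mulVec_eq_neg hα hcard hf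
    refine ⟨htails, fun a ha => ?_⟩
    have := (hΓ.adjMatrix_mulVec_eq_neg_iff_tailSum hα).1 hf a
    rw [if_neg (by omega), htails] at this
    linarith
  · rintro ⟨htails, hsupp⟩
    rw [hΓ.adjMatrix_mulVec_eq_neg_iff_tailSum hα]
    intro a
    rw [htails]
    split_ifs with ha
    · rfl
    · rw [hsupp a (by omega), neg_zero]

theorem eigenspace_zero_eq (hΓ : Γ.IsThresholdGraph v α) {k : ℕ} (hα : α + 1 = 2 * k) :
    Module.End.eigenspace (toLin' (Γ.adjMatrix ℝ)) 0 =
      LinearMap.ker (levelSumConstraints v (range k)) := by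
  ext f
  rw [Module.End.mem_eigenspace_iff, toLin'_apply, zero_smul,
    hΓ.adjMatrix_mulVec_eq_zero_iff hα, mem_ker_levelSumConstraints]
  simp only [mem_range, not_lt]

theorem eigenspace_neg_one_eq (hΓ : Γ.IsThresholdGraph v α) {k : ℕ} (hα : α + 1 = 2 * k)
    (hcard : 2 ≤ #{a | v a = k - 1}) :
    Module.End.eigenspace (toLin' (Γ.adjMatrix ℝ)) (-1) =
      LinearMap.ker (levelSumConstraints v (Icc k α)) := by
  ext f
  rw [Module.End.mem_eigenspace_iff, toLin'_apply, neg_smul, one_smul,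
    hΓ.adjMatrix_mulVec_eq_neg_iff hα hcard, mem_ker_levelSumConstraints]
  simp only [mem_Icc, hΓ.le_threshold, and_true, not_le]

end SimpleGraph.IsThresholdGraph

namespace ZMod

section AnnGraph

variable {n : ℕ} [NeZero n]

theorem mem_annSet_iff {a : ZMod n} {x : ℤ} :
    x ∈ annSet a ↔ ∃ c : ZMod n, (x : ZMod n) = c * a := by
  refine ⟨fun h => ?_, fun ⟨c, hc⟩ g => ⟨(c * g).val, ?_⟩⟩
  · obtain ⟨m, hm⟩ := h 1
    exact ⟨m, by simpa [zsmul_eq_mul] using hm⟩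
  · rw [zsmul_eq_mul, zsmul_eq_mul, hc, Int.cast_natCast, ZMod.natCast_zmod_val]
    ring

theorem annGraph_adj_iff {a b : ZMod n} : (annGraph (ZMod n)).Adj a b ↔ a ≠ b ∧ a * b = 0 := by
  refine and_congr_right fun _ => ⟨fun h => ?_, fun hab x hx y hy g => ?_⟩
  · simpa [zsmul_eq_mul] using
      h a.val (mem_annSet_iff.2 ⟨1, by simp⟩) b.val (mem_annSet_iff.2 ⟨1, by simp⟩) 1
  · obtain ⟨c, hc⟩ := mem_annSet_iff.1 hx
    obtain ⟨d, hd⟩ := mem_annSet_iff.1 hy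
    rw [zsmul_eq_mul, Int.cast_mul, hc, hd]
    linear_combination (c * d * g) * hab

end AnnGraph

/-- The `p`-adic valuation on `ℤ/p^αℤ`, normalised so that `pVal p α 0 = α`. -/
def pVal (p α : ℕ) (a : ZMod (p ^ α)) : ℕ := Nat.findGreatest (fun m => p ^ m ∣ a.val) α

variable {p α : ℕ}

theorem pVal_le (a : ZMod (p ^ α)) : pVal p α a ≤ α := Nat.findGreatest_le α

theorem le_pVal_iff {m : ℕ} (hm : m ≤ α) (a : ZMod (p ^ α)) :
    m ≤ pVal p α a ↔ p ^ m ∣ a.val := by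
  refine ⟨fun h => (pow_dvd_pow p h).trans ?_, Nat.le_findGreatest (P := (p ^ · ∣ a.val)) hm⟩
  exact Nat.findGreatest_spec (P := (p ^ · ∣ a.val)) α.zero_le (one_dvd a.val)

theorem pVal_zero : pVal p α 0 = α :=
  (pVal_le 0).antisymm ((le_pVal_iff le_rfl 0).2 (by simp))

variable [hp : Fact p.Prime]

theorem pVal_eq_min_factorization {a : ZMod (p ^ α)} (ha : a ≠ 0) :
    pVal p α a = min α (a.val.factorization p) := by
  rw [← ZMod.val_ne_zero] at ha
  have hdvd {m : ℕ} : p ^ m ∣ a.val ↔ m ≤ a.val.factorization p :=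
    hp.out.pow_dvd_iff_le_factorization ha
  exact le_antisymm (le_min (pVal_le a) (hdvd.1 ((le_pVal_iff (pVal_le a) a).1 le_rfl)))
    ((le_pVal_iff (min_le_left _ _) a).2 (hdvd.2 (min_le_right _ _)))

theorem pVal_natCast_pow {i : ℕ} (hi : i ≤ α) : pVal p α (p ^ i : ℕ) = i := by
  rcases hi.lt_or_eq with hi | rfl
  · have hval : ((p ^ i : ℕ) : ZMod (p ^ α)).val = p ^ i :=
      ZMod.val_cast_of_lt (Nat.pow_lt_pow_right hp.out.one_lt hi)
    have hne : ((p ^ i : ℕ) : ZMod (p ^ α)) ≠ 0 := by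
      rw [← ZMod.val_ne_zero, hval]
      exact pow_ne_zero i hp.out.ne_zero
    rw [pVal_eq_min_factorization hne, hval, hp.out.factorization_pow]
    simp [hi.le]
  · simp [pVal_zero]

theorem mul_eq_zero_iff_le_pVal_add (a b : ZMod (p ^ α)) :
    a * b = 0 ↔ α ≤ pVal p α a + pVal p α b := by
  rcases eq_or_ne a 0 with rfl | ha
  · simp [pVal_zero]
  rcases eq_or_ne b 0 with rfl | hb
  · simp [pVal_zero]
  have hab : a * b = ((a.val * b.val : ℕ) : ZMod (p ^ α)) := by simp
  rw [pVal_eq_min_factorization ha, pVal_eq_min_factorization hb]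
  rw [← ZMod.val_ne_zero] at ha hb
  rw [hab, ZMod.natCast_eq_zero_iff, hp.out.pow_dvd_iff_le_factorization (mul_ne_zero ha hb),
    Nat.factorization_mul ha hb, Finsupp.add_apply]
  omega

theorem card_le_pVal {m : ℕ} (hm : m ≤ α) :
    #{a : ZMod (p ^ α) | m ≤ pVal p α a} = p ^ (α - m) := by
  let f := (ZMod.castHom (pow_dvd_pow p hm) (ZMod (p ^ m))).toAddMonoidHom
  have hker : ∀ a, a ∈ f.ker ↔ m ≤ pVal p α a := by
    intro a
    rw [le_pVal_iff hm, AddMonoidHom.mem_ker, ← ZMod.natCast_eq_zero_iff, ← ZMod.cast_eq_val]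
    rfl
  have hcard := f.ker.card_mul_index
  rw [AddSubgroup.index_ker, AddMonoidHom.range_eq_top.2 (ZMod.ringHom_surjective _)] at hcard
  rw [AddSubgroup.card_top, Nat.card_zmod, Nat.card_zmod, Nat.card_eq_fintype_card] at hcard
  rw [← Nat.eq_of_mul_eq_mul_right (Nat.pos_of_neZero _)
    (hcard.trans (pow_sub_mul_pow p hm).symm), ← Fintype.card_subtype]
  exact Fintype.card_congr (Equiv.subtypeEquivRight fun a => (hker a).symm)

theorem card_pVal_lt {m : ℕ} (hm : m ≤ α) :
    #{a : ZMod (p ^ α) | pVal p α a < m} = p ^ α - p ^ (α - m) := by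
  have hsplit := card_filter_add_card_filter_not (s := univ) (m ≤ pVal p α ·)
  simp only [not_le, card_le_pVal hm, card_univ, ZMod.card] at hsplit
  omega

theorem card_pVal_eq {m : ℕ} (hm : m < α) :
    #{a : ZMod (p ^ α) | pVal p α a = m} = p ^ (α - m) - p ^ (α - m - 1) := by
  have hsplit : ({a | m ≤ pVal p α a} : Finset (ZMod (p ^ α))) =
      ({a | pVal p α a = m} : Finset _) ∪ ({a | m + 1 ≤ pVal p α a} : Finset _) := by
    ext a
    simp only [mem_filter, mem_univ, true_and, mem_union]
    omega
  have hdisj : Disjoint ({a | pVal p α a = m} : Finset (ZMod (p ^ α)))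
      ({a | m + 1 ≤ pVal p α a} : Finset _) :=
    disjoint_filter.2 fun a _ h => by omega
  have hcard := card_union_of_disjoint hdisj
  rw [← hsplit, card_le_pVal hm.le, card_le_pVal hm, show α - (m + 1) = α - m - 1 by omega]
    at hcard
  omega

theorem isThresholdGraph_annGraph (α : ℕ) :
    (annGraph (ZMod (p ^ α))).IsThresholdGraph (pVal p α) α where
  adj_iff a b := by rw [annGraph_adj_iff, mul_eq_zero_iff_le_pVal_add]
  le_threshold := pVal_le
  exists_level i hi := ⟨_, pVal_natCast_pow hi⟩

end ZMod

theorem Nat.Prime.two_le_pow_sub_pow_pred {p k : ℕ} (hp : p.Prime) (hk : 1 ≤ k)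
    (hpk : ¬(p = 2 ∧ k = 1)) : 2 ≤ p ^ k - p ^ (k - 1) := by
  obtain ⟨j, rfl⟩ : ∃ j, k = j + 1 := ⟨k - 1, by omega⟩
  rw [Nat.add_sub_cancel, pow_succ]
  have hq : 1 ≤ p ^ j := Nat.one_le_pow _ _ hp.pos
  rcases hp.two_le.eq_or_lt with rfl | hp3
  · have : 2 ≤ 2 ^ j := Nat.le_self_pow (by rintro rfl; exact hpk ⟨rfl, rfl⟩) 2
    omega
  · have : 3 * p ^ j ≤ p ^ j * p := by nlinarith
    omega

/-- for a prime `p` and `α = 2k - 1` with `k ≥ 1`, `(p, k) ≠ (2, 1)`, the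
eigenvalue `0` of the adjacency matrix of `Γ(ℤ/p^αℤ)` has multiplicity
`p^α - p^(k-1) - k`, and the eigenvalue `-1` has multiplicity `p^(k-1) - k`. -/
theorem annGraph_adj_multiplicities_odd (p k : ℕ) [Fact p.Prime] (hk : 1 ≤ k)
    (hpk : ¬ (p = 2 ∧ k = 1)) :
    Module.finrank ℝ
        (Module.End.eigenspace (Matrix.toLin' (annAdjMatrix (ZMod (p ^ (2 * k - 1))))) 0) =
      p ^ (2 * k - 1) - p ^ (k - 1) - k ∧
    Module.finrank ℝ
        (Module.End.eigenspace (Matrix.toLin' (annAdjMatrix (ZMod (p ^ (2 * k - 1))))) (-1)) =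
      p ^ (k - 1) - k := by
  rw [show k - 1 = 2 * k - 1 - k by omega]
  generalize hα : 2 * k - 1 = α
  replace hα : α + 1 = 2 * k := by omega
  have hΓ := ZMod.isThresholdGraph_annGraph (p := p) α
  have hcard : 2 ≤ #{a : ZMod (p ^ α) | ZMod.pVal p α a = k - 1} := by
    rw [ZMod.card_pVal_eq (by omega), show α - (k - 1) = k by omega]
    exact (Fact.out : p.Prime).two_le_pow_sub_pow_pred hk hpk
  classical
  rw [annAdjMatrix, hΓ.eigenspace_zero_eq hα, hΓ.eigenspace_neg_one_eq hα hcard,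
    finrank_ker_levelSumConstraints fun i hi => hΓ.exists_level i (by rw [mem_range] at hi; omega),
    finrank_ker_levelSumConstraints fun i hi => hΓ.exists_level i (mem_Icc.1 hi).2]
  simp only [mem_range, mem_Icc, ZMod.pVal_le, and_true, card_range, Nat.card_Icc]
  rw [ZMod.card_pVal_lt (by omega), ZMod.card_le_pVal (by omega)]
  omega
end
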